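/- Let q be a prime power with q ≥ 4, let l ≥ 1, let a_1, ..., a_l be distinct elements of F_q, let D = F_q \ {a_1, ..., a_l}, and let 2 ≤ k ≤ q - l - 1. For each j with 1 ≤ j ≤ l, let u_j(x) = λ_j (x - a_j)^{q-2} + r_j(x), where λ_j ∈ F_q is nonzero and r_j(x) ∈ F_q[x] has degree at most k-1. Then the received word u_j(D) = (u_j(x))_{x ∈ D} is a deep hole of the generalized Reed-Solomon code C_q(D,k), i.e., d(u_j(D), C_q(D,k)) = (q - l) - k. -/

import Mathlib

open Polynomial

/-- The generalized Reed-Solomon code `C_q(D, k)`: the set of words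
`(f(x))_{x ∈ D}` for polynomials `f ∈ F_q[x]` of degree at most `k - 1`. -/
def genRSCode (F : Type*) [Field F] (D : Finset F) (k : ℕ) : Set (↥D → F) :=
  {w | ∃ f : F[X], f.degree < (k : ℕ) ∧ ∀ x : ↥D, w x = f.eval (x : F)}

/-- The error distance `d(u, C_q(D, k))` of a received word `u ∈ F_q^n` to the
generalized Reed-Solomon code: the minimum Hamming distance to a codeword. -/
noncomputable def errDist {F : Type*} [Field F] [DecidableEq F]
    (D : Finset F) (k : ℕ) (u : ↥D → F) : ℕ :=
  sInf {d : ℕ | ∃ w ∈ genRSCode F D k, d = hammingDist u w}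

/-!
On `D` the word `u_j` is `x ↦ λ / (x - a_j) + r(x)`, because `y ^ (q - 2) = y⁻¹` on `F_q^×`.
If it agreed with a codeword `f` at more than `k` points, the polynomial
`(r - f) (X - a_j) + λ`, which is nonzero (its value at `a_j` is `λ`) and of degree at most `k`,
would have more than `k` roots. So every codeword is at distance at least `n - k` from `u_j(D)`,
while Lagrange interpolation of any word at `k` points of `D` gives a codeword at distance at
most `n - k`.
-/

open Finset

theorem hammingDist_eq_card_sub_card_filter_eq {ι β : Type*} [Fintype ι] [DecidableEq β]
    (x y : ι → β) : hammingDist x y = Fintype.card ι - #{i | x i = y i} := by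
  have h := card_filter_add_card_filter_not (s := univ) (fun i => x i = y i)
  rw [card_univ] at h
  rw [hammingDist, ← h]
  simp only [ne_eq, Nat.add_sub_cancel_left]

theorem pow_card_sub_two_eq_inv {K : Type*} [Field K] [Fintype K] {x : K} (hx : x ≠ 0) :
    x ^ (Fintype.card K - 2) = x⁻¹ := by
  have hcard : Fintype.card K - 1 = Fintype.card K - 2 + 1 := by
    have := Fintype.one_lt_card (α := K)
    omega
  refine eq_inv_of_mul_eq_one_left ?_
  rw [← pow_succ, ← hcard, FiniteField.pow_card_sub_one_eq_one x hx]

section ErrorDistance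

variable {F : Type*} [Field F] {D : Finset F} {k : ℕ}

theorem eval_mem_genRSCode {f : F[X]} (hf : f.degree < k) :
    (fun x : ↥D => f.eval (x : F)) ∈ genRSCode F D k :=
  ⟨f, hf, fun _ => rfl⟩

variable [DecidableEq F]

theorem errDist_le_hammingDist {u w : ↥D → F} (hw : w ∈ genRSCode F D k) :
    errDist D k u ≤ hammingDist u w :=
  Nat.sInf_le ⟨w, hw, rfl⟩

theorem exists_errDist_eq_hammingDist (u : ↥D → F) :
    ∃ w ∈ genRSCode F D k, errDist D k u = hammingDist u w := by
  have hzero : (fun x : ↥D => (0 : F[X]).eval (x : F)) ∈ genRSCode F D k :=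
    eval_mem_genRSCode (by rw [degree_zero]; exact WithBot.bot_lt_coe k)
  exact Nat.sInf_mem (s := {d | ∃ w ∈ genRSCode F D k, d = hammingDist u w}) ⟨_, _, hzero, rfl⟩

theorem errDist_le_card_sub (u : ↥D → F) (hk : k ≤ #D) : errDist D k u ≤ #D - k := by
  obtain ⟨T, -, hT⟩ := exists_subset_card_eq (s := (univ : Finset ↥D)) (by simpa using hk)
  have hinj : Set.InjOn Subtype.val (T : Set ↥D) := Subtype.val_injective.injOn
  set f := Lagrange.interpolate T Subtype.val u
  have hf : f.degree < k := hT ▸ Lagrange.degree_interpolate_lt _ hinj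
  have hagree : T ⊆ ({x | u x = f.eval (x : F)} : Finset ↥D) := fun x hx => by
    simp only [mem_filter, mem_univ, true_and]
    exact (Lagrange.eval_interpolate_at_node u hinj hx).symm
  calc errDist D k u ≤ hammingDist u (fun x => f.eval (x : F)) :=
        errDist_le_hammingDist (eval_mem_genRSCode hf)
    _ ≤ #D - k := by
        rw [hammingDist_eq_card_sub_card_filter_eq, Fintype.card_coe, ← hT]
        exact Nat.sub_le_sub_left (card_le_card hagree) _

theorem card_sub_le_errDist (u : ↥D → F)
    (h : ∀ f : F[X], f.degree < k → #{x | u x = f.eval (x : F)} ≤ k) :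
    #D - k ≤ errDist D k u := by
  obtain ⟨w, ⟨f, hf, hw⟩, hdist⟩ := exists_errDist_eq_hammingDist (k := k) u
  obtain rfl : w = fun x : ↥D => f.eval (x : F) := funext hw
  rw [hdist, hammingDist_eq_card_sub_card_filter_eq, Fintype.card_coe]
  exact Nat.sub_le_sub_left (h f hf) _

theorem errDist_eq_card_sub (u : ↥D → F) (hk : k ≤ #D)
    (h : ∀ f : F[X], f.degree < k → #{x | u x = f.eval (x : F)} ≤ k) :
    errDist D k u = #D - k :=
  (errDist_le_card_sub u hk).antisymm (card_sub_le_errDist u h)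

end ErrorDistance

theorem card_filter_eval_add_inv_eq_le {F : Type*} [Field F] [DecidableEq F] {D : Finset F}
    {a lam : F} (haD : a ∉ D) (hlam : lam ≠ 0) {r f : F[X]} {k : ℕ} (hr : r.degree < k)
    (hf : f.degree < k) :
    #{x : ↥D | lam * ((x : F) - a)⁻¹ + r.eval (x : F) = f.eval (x : F)} ≤ k := by
  set g : F[X] := (r - f) * (X - C a) + C lam
  have hg : g ≠ 0 := fun h => hlam (by simpa [g] using congrArg (eval a) h)
  have hgdeg : g.natDegree ≤ k := by
    rcases eq_or_ne (r - f) 0 with h | h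
    · simp [g, h]
    have hrf : (r - f).natDegree < k :=
      (natDegree_lt_iff_degree_lt h).mpr ((degree_sub_le r f).trans_lt (max_lt hr hf))
    refine (natDegree_add_le _ _).trans (max_le ?_ (by simp))
    refine natDegree_mul_le.trans ?_
    rw [natDegree_X_sub_C]
    omega
  have hroot (x : ↥D) (hx : lam * ((x : F) - a)⁻¹ + r.eval (x : F) = f.eval (x : F)) :
      g.IsRoot x := by
    have hxa : (x : F) - a ≠ 0 := sub_ne_zero.mpr fun h => haD (h ▸ x.2)
    rw [IsRoot, eval_add, eval_mul, eval_sub, eval_sub, eval_X, eval_C, eval_C]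
    field_simp at hx
    linear_combination hx
  calc _ ≤ #g.roots.toFinset := by
        refine card_le_card_of_injOn Subtype.val (fun x hx => ?_) Subtype.val_injective.injOn
        rw [coe_filter] at hx
        exact Multiset.mem_toFinset.mpr ((mem_roots hg).mpr (hroot x hx.2))
    _ ≤ g.natDegree := (Multiset.toFinset_card_le _).trans (card_roots' g)
    _ ≤ k := hgdeg

theorem uj_is_deep_hole_general {F : Type*} [Field F] [Fintype F] [DecidableEq F]
    (q l k : ℕ) (hq : q = Fintype.card F)
    (a : Fin l → F) (ha : Function.Injective a)
    (D : Finset F) (hD : D = Finset.univ \ Finset.image a Finset.univ)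
    (hk : k ≤ q - l - 1)
    (j : Fin l) (lam : F) (hlam : lam ≠ 0)
    (r : F[X]) (hr : r.degree < (k : ℕ))
    (u : F[X]) (hu : u = C lam * (X - C (a j)) ^ (q - 2) + r) :
    errDist D k (fun x : ↥D => u.eval (x : F)) = (q - l) - k := by
  have hcard : #D = q - l := by
    rw [hD, card_sdiff_of_subset (subset_univ _), card_image_of_injective _ ha, card_univ,
      card_univ, Fintype.card_fin, hq]
  have haj : a j ∉ D := by simp [hD]
  have heval (x : ↥D) : u.eval (x : F) = lam * ((x : F) - a j)⁻¹ + r.eval (x : F) := by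
    have hxa : (x : F) - a j ≠ 0 := sub_ne_zero.mpr fun h => haj (h ▸ x.2)
    simp [hu, hq, pow_card_sub_two_eq_inv hxa]
  rw [← hcard]
  refine errDist_eq_card_sub _ (by omega) fun f hf => ?_
  simp_rw [heval]
  exact card_filter_eval_add_inv_eq_le haj hlam hr hf

/-- Let `q ≥ 4`, let `a_1, ..., a_l` be distinct elements of `F_q`,
`D = F_q \ {a_1, ..., a_l}`, and `2 ≤ k ≤ q - l - 1`.  For
`u_j(x) = λ_j (x - a_j)^(q-2) + r_j(x)` with `λ_j ≠ 0` and `deg r_j ≤ k - 1`,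
the word `u_j(D)` is a deep hole of `C_q(D, k)`. -/
theorem uj_is_deep_hole {F : Type*} [Field F] [Fintype F] [DecidableEq F]
    (q l k : ℕ) (hq : q = Fintype.card F) (hq4 : 4 ≤ q) (hl : 1 ≤ l)
    (a : Fin l → F) (ha : Function.Injective a)
    (D : Finset F) (hD : D = Finset.univ \ Finset.image a Finset.univ)
    (hk2 : 2 ≤ k) (hk : k ≤ q - l - 1)
    (j : Fin l) (lam : F) (hlam : lam ≠ 0)
    (r : F[X]) (hr : r.degree < (k : ℕ))
    (u : F[X]) (hu : u = C lam * (X - C (a j)) ^ (q - 2) + r) :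
    errDist D k (fun x : ↥D => u.eval (x : F)) = (q - l) - k :=
  uj_is_deep_hole_general q l k hq a ha D hD hk j lam hlam r hr u hu
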